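/- arXiv:1812.06005 — 3 statements merged into one kernel-verified Lean document; each statement's English description precedes it below -/
import Mathlib

section
/- Let X : [0,T] → ℝ be a nonnegative continuous function such that X(t) ≤ a + b·X(t)^θ for all t ∈ [0,T], where a, b > 0 and θ > 1 are constants satisfying a < (1 − 1/θ)·(θb)^{−1/(θ−1)} and X(0) ≤ (θb)^{−1/(θ−1)}. Then X(t) ≤ (θ/(θ−1))·a for all t ∈ [0,T]. -/
open Real Set

theorem continuity_argument
    (T a b θ : ℝ) (X : ℝ → ℝ)
    (hT : 0 < T) (ha : 0 < a) (hb : 0 < b) (hθ : 1 < θ)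
    (hX_cont : ContinuousOn X (Icc 0 T))
    (hX_nonneg : ∀ t ∈ Icc (0:ℝ) T, 0 ≤ X t)
    (hX_ineq : ∀ t ∈ Icc (0:ℝ) T, X t ≤ a + b * X t ^ θ)
    (ha_small : a < (1 - 1 / θ) * (θ * b) ^ (-(1 / (θ - 1))))
    (hX0 : X 0 ≤ (θ * b) ^ (-(1 / (θ - 1)))) :
    ∀ t ∈ Icc (0:ℝ) T, X t ≤ (θ / (θ - 1)) * a := by
  set M : ℝ := (θ * b) ^ (-(1 / (θ - 1))) with hMdef
  have hθ0 : 0 < θ := by linarith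
  have hθ1 : (0:ℝ) < θ - 1 := by linarith
  have hθb : 0 < θ * b := by positivity
  have hM : 0 < M := Real.rpow_pos_of_pos hθb _
  have hMpow : M ^ (θ - 1) = (θ * b)⁻¹ := by
    rw [hMdef, ← Real.rpow_mul hθb.le]
    have he : -(1 / (θ - 1)) * (θ - 1) = -1 := by field_simp
    rw [he, Real.rpow_neg_one]
  -- b * M ^ θ = M / θ
  have hbM : b * M ^ θ = M / θ := by
    have : M ^ θ = M ^ (θ - 1) * M := by
      rw [← Real.rpow_add_one hM.ne' (θ - 1)]
      norm_num
    rw [this, hMpow]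
    field_simp
  -- X t ≠ M on [0,T]
  have hne : ∀ t ∈ Icc (0:ℝ) T, X t ≠ M := by
    intro t ht heq
    have h1 := hX_ineq t ht
    rw [heq, hbM] at h1
    have h2 : a < (1 - 1 / θ) * M := ha_small
    have : (1 - 1 / θ) * M = M - M / θ := by field_simp
    linarith [this ▸ h2]
  -- X t ≤ M on [0,T]
  have hle : ∀ t ∈ Icc (0:ℝ) T, X t ≤ M := by
    intro t ht
    by_contra hgt
    push_neg at hgt
    have h0T : (0:ℝ) ∈ Icc (0:ℝ) T := ⟨le_refl 0, hT.le⟩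
    have hX0lt : X 0 < M := lt_of_le_of_ne hX0 (hne 0 h0T)
    have hsub : Icc (0:ℝ) t ⊆ Icc 0 T := Icc_subset_Icc le_rfl ht.2
    have hivt := intermediate_value_Icc ht.1 (hX_cont.mono hsub)
    have hMmem : M ∈ Icc (X 0) (X t) := ⟨hX0lt.le, hgt.le⟩
    obtain ⟨s, hs, hXs⟩ := hivt hMmem
    exact hne s (hsub hs) hXs
  -- conclude
  intro t ht
  have hx0 := hX_nonneg t ht
  have hxM := hle t ht
  have hineq := hX_ineq t ht
  rcases eq_or_lt_of_le hx0 with h0 | h0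
  · rw [← h0]; positivity
  · have hpow : X t ^ (θ - 1) ≤ M ^ (θ - 1) :=
      Real.rpow_le_rpow hx0 hxM hθ1.le
    have hxθ : X t ^ θ = X t ^ (θ - 1) * X t := by
      rw [← Real.rpow_add_one h0.ne' (θ - 1)]
      norm_num
    have hbx : b * X t ^ θ ≤ X t / θ := by
      rw [hxθ]
      have h1 : b * (X t ^ (θ - 1) * X t) ≤ b * (M ^ (θ - 1) * X t) := by
        apply mul_le_mul_of_nonneg_left _ hb.le
        exact mul_le_mul_of_nonneg_right hpow hx0
      have h2 : b * (M ^ (θ - 1) * X t) = X t / θ := by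
        rw [hMpow]; field_simp
      linarith
    have hsum : X t ≤ a + X t / θ := by linarith
    rw [div_mul_eq_mul_div, le_div_iff₀ hθ1]
    have h := mul_le_mul_of_nonneg_right hsum hθ0.le
    have hc : X t / θ * θ = X t := div_mul_cancel₀ (X t) (ne_of_gt hθ0)
    nlinarith [h, hc]
end

section
/- Define f : ℂ → ℂ by f(u) = u·(e^{4π|u|²} − 1). For every ε > 0 there exists a constant C_ε > 0 such that for all u, v ∈ ℂ, |f(u) − f(v)| ≤ C_ε |u − v| (e^{4π(1+ε)|u|²} − 1 + e^{4π(1+ε)|v|²} − 1). -/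
open Real

private lemma exp_sub_one_le' (t : ℝ) : Real.exp t - 1 ≤ t * Real.exp t := by
  have h : 1 - t ≤ (Real.exp t)⁻¹ := by
    have := Real.add_one_le_exp (-t)
    rw [Real.exp_neg] at this; linarith
  have hp := Real.exp_pos t
  have hc : (Real.exp t)⁻¹ * Real.exp t = 1 := inv_mul_cancel₀ (ne_of_gt hp)
  nlinarith [mul_le_mul_of_nonneg_right h hp.le]

private lemma exp_diff_le' (A B : ℝ) (h : B ≤ A) :
    Real.exp A - Real.exp B ≤ (A - B) * Real.exp A := by
  have h1 := exp_sub_one_le' (A - B)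
  have h2 : Real.exp B * Real.exp (A - B) = Real.exp A := by
    rw [← Real.exp_add]; ring_nf
  nlinarith [Real.exp_pos B]

private lemma away' (x y : ℝ) (hx : 0 ≤ x) :
    y * Real.exp x ≤ Real.exp (x + y) - 1 := by
  have h1 := Real.add_one_le_exp y
  have h2 := Real.one_le_exp hx
  have h3 : Real.exp (x + y) = Real.exp x * Real.exp y := Real.exp_add x y
  nlinarith [Real.exp_pos x]

set_option maxHeartbeats 800000 in
theorem lipschitz_exponential_nonlinearity :
    ∀ ε > (0:ℝ), ∃ C > (0:ℝ), ∀ u v : ℂ,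
      ‖u * (((Real.exp (4 * π * ‖u‖ ^ 2) - 1 : ℝ)) : ℂ) -
        v * (((Real.exp (4 * π * ‖v‖ ^ 2) - 1 : ℝ)) : ℂ)‖ ≤
      C * ‖u - v‖ * ((Real.exp (4 * π * (1 + ε) * ‖u‖ ^ 2) - 1) +
        (Real.exp (4 * π * (1 + ε) * ‖v‖ ^ 2) - 1)) := by
  intro ε hε
  refine ⟨1 + 2/ε, by positivity, ?_⟩
  intro u v
  have hπ := Real.pi_pos
  set a := ‖u‖ with ha
  set b := ‖v‖ with hb
  set d := ‖u - v‖ with hd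
  have ha0 : (0:ℝ) ≤ a := norm_nonneg u
  have hb0 : (0:ℝ) ≤ b := norm_nonneg v
  have hd0 : (0:ℝ) ≤ d := norm_nonneg _
  set M : ℝ := max a b with hM
  have hM0 : 0 ≤ M := le_trans ha0 (le_max_left a b)
  have haM : a ≤ M := le_max_left a b
  have hbM : b ≤ M := le_max_right a b
  have h4π : (0:ℝ) ≤ 4 * π := by positivity
  set Eu : ℝ := Real.exp (4 * π * (1 + ε) * a ^ 2) - 1 with hEu
  set Ev : ℝ := Real.exp (4 * π * (1 + ε) * b ^ 2) - 1 with hEv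
  have hEu0 : 0 ≤ Eu := by
    have : (1:ℝ) ≤ Real.exp (4 * π * (1 + ε) * a ^ 2) := Real.one_le_exp (by positivity)
    rw [hEu]; linarith
  have hEv0 : 0 ≤ Ev := by
    have : (1:ℝ) ≤ Real.exp (4 * π * (1 + ε) * b ^ 2) := Real.one_le_exp (by positivity)
    rw [hEv]; linarith
  have hEM : Real.exp (4 * π * (1 + ε) * M ^ 2) - 1 ≤ Eu + Ev := by
    rcases max_cases a b with ⟨h1, _⟩ | ⟨h1, _⟩ <;> rw [hM, h1] <;> [linarith; linarith]
  have key : u * ((Real.exp (4 * π * a ^ 2) - 1 : ℝ) : ℂ) -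
      v * ((Real.exp (4 * π * b ^ 2) - 1 : ℝ) : ℂ) =
      (u - v) * ((Real.exp (4 * π * a ^ 2) - 1 : ℝ) : ℂ) +
      v * (((Real.exp (4 * π * a ^ 2) - Real.exp (4 * π * b ^ 2) : ℝ)) : ℂ) := by
    push_cast
    ring
  rw [key]
  have step1 : ‖(u - v) * ((Real.exp (4 * π * a ^ 2) - 1 : ℝ) : ℂ) +
      v * (((Real.exp (4 * π * a ^ 2) - Real.exp (4 * π * b ^ 2) : ℝ)) : ℂ)‖ ≤
      d * |Real.exp (4 * π * a ^ 2) - 1| +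
      b * |Real.exp (4 * π * a ^ 2) - Real.exp (4 * π * b ^ 2)| := by
    refine le_trans (norm_add_le _ _) ?_
    simp only [norm_mul, Complex.norm_real, Real.norm_eq_abs]
    exact le_refl _
  refine le_trans step1 ?_
  -- bound term 1
  have t1 : |Real.exp (4 * π * a ^ 2) - 1| ≤ Eu := by
    have hmono : 4 * π * a ^ 2 ≤ 4 * π * (1 + ε) * a ^ 2 := by
      nlinarith [mul_nonneg (mul_nonneg hπ.le hε.le) (sq_nonneg a)]
    rw [abs_of_nonneg (by nlinarith [Real.one_le_exp (show (0:ℝ) ≤ 4 * π * a ^ 2 by positivity)])]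
    have := Real.exp_le_exp.mpr hmono
    rw [hEu]; linarith
  have habd : |a - b| ≤ d := by
    rw [ha, hb, hd]; exact abs_norm_sub_norm_le u v
  have hexpM : ∀ x : ℝ, 0 ≤ x → x ≤ M →
      Real.exp (4 * π * x ^ 2) ≤ Real.exp (4 * π * M ^ 2) := by
    intro x hx hxM
    exact Real.exp_le_exp.mpr (mul_le_mul_of_nonneg_left (pow_le_pow_left₀ hx hxM 2) h4π)
  -- bound term 2
  have t2 : |Real.exp (4 * π * a ^ 2) - Real.exp (4 * π * b ^ 2)| ≤
      8 * π * M * d * Real.exp (4 * π * M ^ 2) := by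
    rcases le_total b a with h | h
    · have hmono : Real.exp (4 * π * b ^ 2) ≤ Real.exp (4 * π * a ^ 2) :=
        Real.exp_le_exp.mpr (mul_le_mul_of_nonneg_left (pow_le_pow_left₀ hb0 h 2) h4π)
      rw [abs_of_nonneg (by linarith)]
      have h1 := exp_diff_le' (4 * π * a ^ 2) (4 * π * b ^ 2)
        (mul_le_mul_of_nonneg_left (pow_le_pow_left₀ hb0 h 2) h4π)
      have hab : a - b ≤ d := le_trans (le_abs_self _) habd
      have hprod : (a + b) * (a - b) ≤ 2 * M * d := by nlinarith
      have h2 : 4 * π * a ^ 2 - 4 * π * b ^ 2 ≤ 8 * π * M * d := by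
        have := mul_le_mul_of_nonneg_left hprod h4π
        nlinarith
      have h3 := hexpM a ha0 haM
      have h5 : (4 * π * a ^ 2 - 4 * π * b ^ 2) * Real.exp (4 * π * a ^ 2) ≤
          (8 * π * M * d) * Real.exp (4 * π * M ^ 2) :=
        mul_le_mul h2 h3 (Real.exp_pos _).le (by positivity)
      linarith
    · have hmono : Real.exp (4 * π * a ^ 2) ≤ Real.exp (4 * π * b ^ 2) :=
        Real.exp_le_exp.mpr (mul_le_mul_of_nonneg_left (pow_le_pow_left₀ ha0 h 2) h4π)
      rw [abs_of_nonpos (by linarith)]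
      have h1 := exp_diff_le' (4 * π * b ^ 2) (4 * π * a ^ 2)
        (mul_le_mul_of_nonneg_left (pow_le_pow_left₀ ha0 h 2) h4π)
      have hab : b - a ≤ d := by
        have := neg_abs_le (a - b); linarith [habd]
      have hprod : (a + b) * (b - a) ≤ 2 * M * d := by nlinarith
      have h2 : 4 * π * b ^ 2 - 4 * π * a ^ 2 ≤ 8 * π * M * d := by
        have := mul_le_mul_of_nonneg_left hprod h4π
        nlinarith
      have h3 := hexpM b hb0 hbM
      have h5 : (4 * π * b ^ 2 - 4 * π * a ^ 2) * Real.exp (4 * π * b ^ 2) ≤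
          (8 * π * M * d) * Real.exp (4 * π * M ^ 2) :=
        mul_le_mul h2 h3 (Real.exp_pos _).le (by positivity)
      linarith
  have t2' : b * |Real.exp (4 * π * a ^ 2) - Real.exp (4 * π * b ^ 2)| ≤
      (2/ε) * d * (Eu + Ev) := by
    have step : b * |Real.exp (4 * π * a ^ 2) - Real.exp (4 * π * b ^ 2)| ≤
        8 * π * M ^ 2 * d * Real.exp (4 * π * M ^ 2) := by
      calc b * |Real.exp (4 * π * a ^ 2) - Real.exp (4 * π * b ^ 2)|
          ≤ M * (8 * π * M * d * Real.exp (4 * π * M ^ 2)) :=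
            mul_le_mul hbM t2 (abs_nonneg _) hM0
        _ = 8 * π * M ^ 2 * d * Real.exp (4 * π * M ^ 2) := by ring
    have aw : 4 * π * ε * M ^ 2 * Real.exp (4 * π * M ^ 2) ≤
        Real.exp (4 * π * (1 + ε) * M ^ 2) - 1 := by
      have h := away' (4 * π * M ^ 2) (4 * π * ε * M ^ 2) (by positivity)
      have he : 4 * π * M ^ 2 + 4 * π * ε * M ^ 2 = 4 * π * (1 + ε) * M ^ 2 := by ring
      rw [he] at h
      linarith
    have hrw : 8 * π * M ^ 2 * d * Real.exp (4 * π * M ^ 2) =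
        (2/ε) * d * (4 * π * ε * M ^ 2 * Real.exp (4 * π * M ^ 2)) := by
      field_simp; ring
    rw [hrw] at step
    have h2e : 0 ≤ (2/ε) * d := by positivity
    calc b * |Real.exp (4 * π * a ^ 2) - Real.exp (4 * π * b ^ 2)|
        ≤ (2/ε) * d * (4 * π * ε * M ^ 2 * Real.exp (4 * π * M ^ 2)) := step
      _ ≤ (2/ε) * d * (Real.exp (4 * π * (1 + ε) * M ^ 2) - 1) :=
          mul_le_mul_of_nonneg_left aw h2e
      _ ≤ (2/ε) * d * (Eu + Ev) := mul_le_mul_of_nonneg_left hEM h2e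
  have t1' : d * |Real.exp (4 * π * a ^ 2) - 1| ≤ d * (Eu + Ev) := by
    have : |Real.exp (4 * π * a ^ 2) - 1| ≤ Eu + Ev := le_trans t1 (by linarith)
    exact mul_le_mul_of_nonneg_left this hd0
  have hfin : (1 + 2/ε) * d * (Eu + Ev) = d * (Eu + Ev) + (2/ε) * d * (Eu + Ev) := by ring
  rw [hfin]
  exact add_le_add t1' t2'
end

section
/- For every u, v ∈ ℂ and every ε > 0 there exists C_ε > 0 such that |(e^{4π|u|²} − 1 + 4π|u|² e^{4π|u|²}) − (e^{4π|v|²} − 1 + 4π|v|² e^{4π|v|²})| ≤ C_ε |u − v| (|u| + e^{4π(1+ε)|u|²} − 1 + |v| + e^{4π(1+ε)|v|²} − 1). -/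
/-!
By the mean value theorem in `r = |u|`, the difference is at most `g'(max |u| |v|) · |u - v|`,
where `g'(r) = (16πr + 32π²r³) e^{4πr²}` is nonnegative and increasing. Since
`r e^{4πr²} ≤ r + 4πr³ e^{4πr²}`, it remains to absorb `r³ e^{4πr²}`: the factor `r³ ≤ r² + r⁶` is
dominated by `e^{4πεr²} - 1`, and `e^{4πr²} (e^{4πεr²} - 1) ≤ e^{4π(1+ε)r²} - 1`.
-/

open Real Set

lemma exp_sub_one_le_mul_exp (x : ℝ) : exp x - 1 ≤ x * exp x := by
  have h := one_sub_le_exp_neg x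
  have hx : exp (-x) * exp x = 1 := by rw [← exp_add, neg_add_cancel, exp_zero]
  nlinarith [exp_pos x]

lemma exp_mul_exp_sub_one_le {a : ℝ} (b : ℝ) (ha : 0 ≤ a) :
    exp a * (exp b - 1) ≤ exp (a + b) - 1 := by
  rw [exp_add]
  linarith [one_le_exp ha]

lemma add_pow_three_le_exp_sub_one {c t : ℝ} (hc : 0 < c) (ht : 0 ≤ t) :
    t + t ^ 3 ≤ (1 / c + 6 / c ^ 3) * (exp (c * t) - 1) := by
  have hct : 0 ≤ c * t := by positivity
  have hlin : c * t ≤ exp (c * t) - 1 := by linarith [add_one_le_exp (c * t)]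
  have hcube : (c * t) ^ 3 / 6 ≤ exp (c * t) - 1 := by
    have h := sum_le_exp_of_nonneg hct 4
    simp only [Finset.sum_range_succ, Finset.sum_range_zero, Nat.factorial] at h
    norm_num at h
    nlinarith [sq_nonneg (c * t)]
  calc t + t ^ 3 = 1 / c * (c * t) + 6 / c ^ 3 * ((c * t) ^ 3 / 6) := by field_simp
    _ ≤ 1 / c * (exp (c * t) - 1) + 6 / c ^ 3 * (exp (c * t) - 1) := by gcongr
    _ = _ := by ring

/-- `∂f/∂u` for `f(u) = u (e^{α|u|²} - 1)`, as a function of `r = |u|`. -/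
noncomputable def nonlinDeriv (α r : ℝ) : ℝ :=
  exp (α * r ^ 2) - 1 + α * r ^ 2 * exp (α * r ^ 2)

noncomputable def nonlinDeriv' (α r : ℝ) : ℝ :=
  (4 * α * r + 2 * α ^ 2 * r ^ 3) * exp (α * r ^ 2)

lemma hasDerivAt_nonlinDeriv (α r : ℝ) :
    HasDerivAt (nonlinDeriv α) (nonlinDeriv' α r) r := by
  have hq : HasDerivAt (fun r : ℝ => α * r ^ 2) (2 * α * r) r := by
    simpa [mul_comm, mul_left_comm, mul_assoc] using (hasDerivAt_pow 2 r).const_mul α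
  have he := hq.exp
  refine ((he.sub_const 1).add (hq.mul he)).congr_deriv ?_
  unfold nonlinDeriv'
  ring

variable {α : ℝ}

lemma nonlinDeriv'_nonneg (hα : 0 ≤ α) {r : ℝ} (hr : 0 ≤ r) : 0 ≤ nonlinDeriv' α r := by
  unfold nonlinDeriv'
  positivity

lemma monotoneOn_nonlinDeriv' (hα : 0 ≤ α) : MonotoneOn (nonlinDeriv' α) (Ici 0) := by
  have hpoly : MonotoneOn (fun r : ℝ => 4 * α * r + 2 * α ^ 2 * r ^ 3) (Ici 0) :=
    fun x hx y _ hxy => by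
      dsimp only
      have := pow_le_pow_left₀ hx hxy 3
      gcongr
  have hexp : MonotoneOn (fun r : ℝ => exp (α * r ^ 2)) (Ici 0) :=
    fun x hx y _ hxy => by
      dsimp only
      have := pow_le_pow_left₀ hx hxy 2
      gcongr
  exact hpoly.mul hexp (fun r (hr : 0 ≤ r) => by positivity) (fun r _ => (exp_pos _).le)

lemma abs_nonlinDeriv_sub_le (hα : 0 ≤ α) {a b : ℝ} (ha : 0 ≤ a) (hb : 0 ≤ b) :
    |nonlinDeriv α a - nonlinDeriv α b| ≤ nonlinDeriv' α (max a b) * |a - b| := by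
  have hmax : 0 ≤ max a b := le_max_of_le_left ha
  have hbound : ∀ x ∈ Icc 0 (max a b), ‖nonlinDeriv' α x‖ ≤ nonlinDeriv' α (max a b) :=
    fun x hx => by
      rw [Real.norm_of_nonneg (nonlinDeriv'_nonneg hα hx.1)]
      exact monotoneOn_nonlinDeriv' hα hx.1 hmax hx.2
  exact (convex_Icc _ _).norm_image_sub_le_of_norm_hasDerivWithin_le
    (fun x _ => (hasDerivAt_nonlinDeriv α x).hasDerivWithinAt) hbound
    ⟨hb, le_max_right a b⟩ ⟨ha, le_max_left a b⟩

lemma nonlinDeriv'_max_le (hα : 0 ≤ α) {a b : ℝ} (ha : 0 ≤ a) (hb : 0 ≤ b) :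
    nonlinDeriv' α (max a b) ≤ nonlinDeriv' α a + nonlinDeriv' α b := by
  rcases max_choice a b with h | h <;> rw [h]
  · linarith [nonlinDeriv'_nonneg hα hb]
  · linarith [nonlinDeriv'_nonneg hα ha]

lemma nonlinDeriv'_le {ε : ℝ} (hα : 0 < α) (hε : 0 < ε) : ∃ C > 0, ∀ r, 0 ≤ r →
    nonlinDeriv' α r ≤ C * (r + (exp (α * (1 + ε) * r ^ 2) - 1)) := by
  set K := 1 / (α * ε) + 6 / (α * ε) ^ 3
  have hαε : 0 < α * ε := mul_pos hα hε
  have hK : 0 < K := by positivity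
  refine ⟨4 * α + 6 * α ^ 2 * K, by positivity, fun r hr => ?_⟩
  set e := exp (α * r ^ 2)
  have he : 0 < e := exp_pos _
  have hlin : r * e ≤ r + α * r ^ 3 * e := by
    nlinarith [mul_le_mul_of_nonneg_left (exp_sub_one_le_mul_exp (α * r ^ 2)) hr]
  have hcube : r ^ 3 ≤ K * (exp (α * ε * r ^ 2) - 1) := by
    have hpoly : r ^ 3 ≤ r ^ 2 + (r ^ 2) ^ 3 := by
      nlinarith [mul_nonneg (sq_nonneg r) (sq_nonneg (r - 1 / 2)),
        mul_nonneg (sq_nonneg r) (sq_nonneg (r ^ 2 - 1 / 2))]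
    exact hpoly.trans (add_pow_three_le_exp_sub_one hαε (sq_nonneg r))
  have hsplit : e * (exp (α * ε * r ^ 2) - 1) ≤ exp (α * (1 + ε) * r ^ 2) - 1 := by
    have := exp_mul_exp_sub_one_le (α * ε * r ^ 2) (by positivity : 0 ≤ α * r ^ 2)
    rwa [show α * r ^ 2 + α * ε * r ^ 2 = α * (1 + ε) * r ^ 2 by ring] at this
  have hE : 0 ≤ exp (α * (1 + ε) * r ^ 2) - 1 := by
    linarith [one_le_exp (by positivity : 0 ≤ α * (1 + ε) * r ^ 2)]
  calc nonlinDeriv' α r = 4 * α * (r * e) + 2 * α ^ 2 * (r ^ 3 * e) := by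
        unfold nonlinDeriv'; ring
    _ ≤ 4 * α * r + 6 * α ^ 2 * (r ^ 3 * e) := by
        nlinarith [mul_le_mul_of_nonneg_left hlin (by positivity : (0 : ℝ) ≤ 4 * α)]
    _ ≤ 4 * α * r + 6 * α ^ 2 * K * (e * (exp (α * ε * r ^ 2) - 1)) := by
        have h := mul_le_mul_of_nonneg_left (mul_le_mul_of_nonneg_right hcube he.le)
          (by positivity : (0 : ℝ) ≤ 6 * α ^ 2)
        linear_combination h
    _ ≤ 4 * α * r + 6 * α ^ 2 * K * (exp (α * (1 + ε) * r ^ 2) - 1) := by gcongr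
    _ ≤ _ := by nlinarith [mul_nonneg hα.le hE, mul_nonneg (by positivity : 0 ≤ 6 * α ^ 2 * K) hr]

theorem derivative_difference_estimate :
    ∀ ε > (0:ℝ), ∃ C > (0:ℝ), ∀ u v : ℂ,
      |(Real.exp (4 * π * ‖u‖ ^ 2) - 1 + 4 * π * ‖u‖ ^ 2 * Real.exp (4 * π * ‖u‖ ^ 2)) -
        (Real.exp (4 * π * ‖v‖ ^ 2) - 1 + 4 * π * ‖v‖ ^ 2 * Real.exp (4 * π * ‖v‖ ^ 2))| ≤
      C * ‖u - v‖ * (‖u‖ + (Real.exp (4 * π * (1 + ε) * ‖u‖ ^ 2) - 1) +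
        ‖v‖ + (Real.exp (4 * π * (1 + ε) * ‖v‖ ^ 2) - 1)) := by
  intro ε hε
  have hα : (0 : ℝ) < 4 * π := by positivity
  obtain ⟨C, hC, hbound⟩ := nonlinDeriv'_le hα hε
  refine ⟨C, hC, fun u v => ?_⟩
  have hu := norm_nonneg u
  have hv := norm_nonneg v
  calc |nonlinDeriv (4 * π) ‖u‖ - nonlinDeriv (4 * π) ‖v‖|
      ≤ nonlinDeriv' (4 * π) (max ‖u‖ ‖v‖) * |‖u‖ - ‖v‖| := abs_nonlinDeriv_sub_le hα.le hu hv
    _ ≤ (nonlinDeriv' (4 * π) ‖u‖ + nonlinDeriv' (4 * π) ‖v‖) * ‖u - v‖ :=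
        mul_le_mul (nonlinDeriv'_max_le hα.le hu hv) (abs_norm_sub_norm_le u v) (abs_nonneg _)
          (add_nonneg (nonlinDeriv'_nonneg hα.le hu) (nonlinDeriv'_nonneg hα.le hv))
    _ ≤ (C * (‖u‖ + (exp (4 * π * (1 + ε) * ‖u‖ ^ 2) - 1)) +
          C * (‖v‖ + (exp (4 * π * (1 + ε) * ‖v‖ ^ 2) - 1))) * ‖u - v‖ := by
        gcongr
        exacts [hbound _ hu, hbound _ hv]
    _ = _ := by ring
end
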